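/- Let H ≥ 0 be self-adjoint on L²(X,m) with quadratic form h, and suppose the semigroup e^{−tH} is ultracontractive, i.e., e^{−tH} maps L¹ boundedly into L² for each t > 0 with norm c(t). Then the super Poincaré inequality holds: for every r > 0 there is β(r) < ∞ such that ‖f‖₂² ≤ r·h[f] + β(r)·‖f‖₁² for all f ∈ Q(H) ∩ L¹. -/

import Mathlib

/-!
Split `f = (f - e^{-tH} f) + e^{-tH} f`. By spectral calculus
`‖f - e^{-tH} f‖² = ((1 - e^{-tH})² f | f) ≤ t h[f]`, since `(1 - e^{-tx})² ≤ min(tx, 1)` for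
`x ≥ 0`, while ultracontractivity gives `‖e^{-tH} f‖₂ ≤ c(t) ‖f‖₁`. With `t = r / 2`,
`‖f‖₂² ≤ 2 ‖f - e^{-tH} f‖² + 2 ‖e^{-tH} f‖² ≤ r h[f] + 2 c(r/2)² ‖f‖₁²`.
-/

open MeasureTheory Set Filter Topology

noncomputable section

/-- The bounded Borel functional calculus of a self-adjoint operator on a complex
Hilbert space `ℋ`, encoded axiomatically: a star-algebra homomorphism from bounded
Borel functions on `ℝ` (only their values on the spectrum matter) into the bounded
operators, with the sup-norm bound and strong σ-continuity. This data is equivalent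
to the projection-valued spectral measure of a self-adjoint operator with the given
spectrum. -/
structure SelfAdjointCalculus (ℋ : Type) [NormedAddCommGroup ℋ]
    [InnerProductSpace ℂ ℋ] [CompleteSpace ℋ] where
  spectrum : Set ℝ
  spectrum_nonempty : spectrum.Nonempty
  spectrum_closed : IsClosed spectrum
  fc : (ℝ → ℂ) → (ℋ →L[ℂ] ℋ)
  fc_one : fc (fun _ => 1) = ContinuousLinearMap.id ℂ ℋ
  fc_add : ∀ f g, fc (f + g) = fc f + fc g
  fc_smul : ∀ (c : ℂ) (f), fc (c • f) = c • fc f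
  fc_mul : ∀ f g, fc (f * g) = (fc f).comp (fc g)
  fc_star : ∀ f, fc (fun t => starRingEnd ℂ (f t)) = ContinuousLinearMap.adjoint (fc f)
  fc_norm : ∀ (f) (C : ℝ), (∀ t ∈ spectrum, ‖f t‖ ≤ C) → ‖fc f‖ ≤ C
  fc_eqOn : ∀ f g, Set.EqOn f g spectrum → fc f = fc g
  fc_tendsto : ∀ (f : ℕ → ℝ → ℂ) (g : ℝ → ℂ) (C : ℝ),
    (∀ n t, ‖f n t‖ ≤ C) →
    (∀ t ∈ spectrum, Filter.Tendsto (fun n => f n t) Filter.atTop (nhds (g t))) →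
    ∀ x : ℋ, Filter.Tendsto (fun n => fc (f n) x) Filter.atTop (nhds (fc g x))
  fc_proj_infinite : ∀ l ∈ spectrum, ∀ ε > 0,
    fc (Set.indicator {t | dist t l < ε} (fun _ => 1)) ≠ 0

namespace SelfAdjointCalculus

variable {ℋ : Type} [NormedAddCommGroup ℋ] [InnerProductSpace ℂ ℋ] [CompleteSpace ℋ]

/-- The spectral projection `𝟙_I(H)`. -/
def proj (Φ : SelfAdjointCalculus ℋ) (I : Set ℝ) : ℋ →L[ℂ] ℋ :=
  Φ.fc (I.indicator (fun _ => 1))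

/-- `B` is `H`-relatively compact: `B ∘ 𝟙_I(H)` is compact for every bounded Borel set
`I ⊆ ℝ`. -/
def RelCompactWrt (B : ℋ →L[ℂ] ℋ) (Φ : SelfAdjointCalculus ℋ) : Prop :=
  ∀ I : Set ℝ, MeasurableSet I → Bornology.IsBounded I →
    IsCompactOperator (B.comp (Φ.proj I))

/-- The semigroup `e^{-tH}` given by the functional calculus. -/
def heat (Φ : SelfAdjointCalculus ℋ) (t : ℝ) : ℋ →L[ℂ] ℋ :=
  Φ.fc (fun x => Complex.exp (-(t * x)))

/-- The resolvent `(H - λ)⁻¹` given by the functional calculus. -/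
def resolvent (Φ : SelfAdjointCalculus ℋ) (l : ℂ) : ℋ →L[ℂ] ℋ :=
  Φ.fc (fun t => ((t : ℂ) - l)⁻¹)

/-- The resolvent set of the self-adjoint operator: complex numbers away from the
(real) spectrum. -/
def resolventSet (Φ : SelfAdjointCalculus ℋ) : Set ℂ :=
  {l : ℂ | ∀ t ∈ Φ.spectrum, (t : ℂ) ≠ l}

/-- Truncated quadratic form `(min(H,n) u | u)`, an approximation of `h[u]`. -/
def formApprox (Φ : SelfAdjointCalculus ℋ) (n : ℕ) (u : ℋ) : ℝ :=
  (inner ℂ (Φ.fc (fun t => ((min t (n : ℝ) : ℝ) : ℂ)) u) u : ℂ).re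

/-- `u` belongs to the form domain `Q(H)` of a semibounded operator: the truncated
quadratic forms stay bounded. -/
def InFormDomain (Φ : SelfAdjointCalculus ℋ) (u : ℋ) : Prop :=
  BddAbove (Set.range fun n => Φ.formApprox n u)

/-- The quadratic form `h[u] = (Hu|u)` (extended to the form domain). -/
def quadForm (Φ : SelfAdjointCalculus ℋ) (u : ℋ) : ℝ :=
  ⨆ n, Φ.formApprox n u

/-- The essential spectrum: points around which every spectral projection has
infinite-dimensional range. -/
def essSpectrum (Φ : SelfAdjointCalculus ℋ) : Set ℝ :=
  {l : ℝ | ∀ ε > 0, ¬ FiniteDimensional ℂ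
    (LinearMap.range ((Φ.proj (Set.Ioo (l - ε) (l + ε))) : ℋ →ₗ[ℂ] ℋ))}

end SelfAdjointCalculus

open ENNReal

/-- Multiplication by the indicator function of a measurable set `E`, as a bounded
operator on `L²(X, μ)`. -/
def indicatorCLM {X : Type} [MeasurableSpace X] (μ : Measure X) (E : Set X)
    (hE : MeasurableSet E) : Lp ℂ 2 μ →L[ℂ] Lp ℂ 2 μ :=
  LinearMap.mkContinuous
    { toFun := fun u => ((Lp.memLp u).indicator hE).toLp (E.indicator u)
      map_add' := fun u v => by
        apply Lp.ext
        have h1 : ((((Lp.memLp (u + v)).indicator hE).toLp (E.indicator ⇑(u + v)) : Lp ℂ 2 μ) : X → ℂ)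
            =ᵐ[μ] E.indicator ⇑(u + v) := MemLp.coeFn_toLp _
        have h2 : ((((Lp.memLp u).indicator hE).toLp (E.indicator ⇑u) : Lp ℂ 2 μ) : X → ℂ)
            =ᵐ[μ] E.indicator ⇑u := MemLp.coeFn_toLp _
        have h3 : ((((Lp.memLp v).indicator hE).toLp (E.indicator ⇑v) : Lp ℂ 2 μ) : X → ℂ)
            =ᵐ[μ] E.indicator ⇑v := MemLp.coeFn_toLp _
        filter_upwards [h1, h2, h3,
          Lp.coeFn_add (((Lp.memLp u).indicator hE).toLp (E.indicator ⇑u))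
            (((Lp.memLp v).indicator hE).toLp (E.indicator ⇑v)),
          Lp.coeFn_add u v] with x hx1 hx2 hx3 hx4 hx5
        rw [hx4, hx1, Pi.add_apply, hx2, hx3]
        simp only [Set.indicator]
        split_ifs with h
        · exact hx5
        · simp
      map_smul' := fun c u => by
        apply Lp.ext
        have h1 : ((((Lp.memLp (c • u)).indicator hE).toLp (E.indicator ⇑(c • u)) : Lp ℂ 2 μ) : X → ℂ)
            =ᵐ[μ] E.indicator ⇑(c • u) := MemLp.coeFn_toLp _
        have h2 : ((((Lp.memLp u).indicator hE).toLp (E.indicator ⇑u) : Lp ℂ 2 μ) : X → ℂ)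
            =ᵐ[μ] E.indicator ⇑u := MemLp.coeFn_toLp _
        filter_upwards [h1, h2,
          Lp.coeFn_smul c (((Lp.memLp u).indicator hE).toLp (E.indicator ⇑u)),
          Lp.coeFn_smul c u] with x hx1 hx2 hx3 hx4
        simp only [RingHom.id_apply]
        rw [hx3, hx1, Pi.smul_apply, hx2]
        simp only [Set.indicator]
        split_ifs with h
        · exact hx4
        · simp }
    1
    (fun u => by
      simp only [LinearMap.coe_mk, AddHom.coe_mk, one_mul]
      rw [Lp.norm_toLp, Lp.norm_def]
      exact ENNReal.toReal_mono (Lp.eLpNorm_ne_top u) (eLpNorm_indicator_le _))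

/-- A Hilbert–Schmidt operator: `∑ ‖T e_i‖² < ∞` for (every) Hilbert basis. -/
def IsHilbertSchmidt {ℋ : Type} [NormedAddCommGroup ℋ] [InnerProductSpace ℂ ℋ]
    [CompleteSpace ℋ] (T : ℋ →L[ℂ] ℋ) : Prop :=
  ∀ (ι : Type) (b : HilbertBasis ι ℂ ℋ), Summable (fun i => ‖T (b i)‖ ^ 2)

theorem sq_one_sub_exp_neg_le_min {y : ℝ} (hy : 0 ≤ y) : (1 - Real.exp (-y)) ^ 2 ≤ min y 1 := by
  have hle_y : 1 - Real.exp (-y) ≤ y := by linarith [Real.one_sub_le_exp_neg y]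
  have hle_one : 1 - Real.exp (-y) ≤ 1 := by linarith [Real.exp_pos (-y)]
  have hnonneg : 0 ≤ 1 - Real.exp (-y) := by
    linarith [Real.exp_le_one_iff.2 (neg_nonpos.2 hy)]
  rw [sq]
  exact le_min (by nlinarith) (by nlinarith)

/-- Capping at `1 ≤ t n` is what lets the bound pass through the truncated forms
`(min(H, n) u | u)` that define `h[u]`. -/
theorem sq_one_sub_exp_neg_mul_le {t x : ℝ} {n : ℕ} (ht : 0 ≤ t) (hn : 1 ≤ t * n) (hx : 0 ≤ x) :
    (1 - Real.exp (-(t * x))) ^ 2 ≤ t * min x n := by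
  refine (sq_one_sub_exp_neg_le_min (mul_nonneg ht hx)).trans ?_
  rw [mul_min_of_nonneg _ _ ht]
  exact min_le_min le_rfl hn

namespace SelfAdjointCalculus

variable {ℋ : Type} [NormedAddCommGroup ℋ] [InnerProductSpace ℂ ℋ] [CompleteSpace ℋ]
  (Φ : SelfAdjointCalculus ℋ)

theorem adjoint_fc_ofReal (φ : ℝ → ℝ) :
    (Φ.fc fun x => (φ x : ℂ)).adjoint = Φ.fc fun x => (φ x : ℂ) := by
  rw [← Φ.fc_star]
  simp only [Complex.conj_ofReal]

theorem norm_fc_ofReal_apply_sq (φ : ℝ → ℝ) (u : ℋ) :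
    ‖Φ.fc (fun x => (φ x : ℂ)) u‖ ^ 2 =
      (inner ℂ (Φ.fc (fun x => ((φ x ^ 2 : ℝ) : ℂ)) u) u).re := by
  set A := Φ.fc fun x => (φ x : ℂ)
  have hsq : (Φ.fc fun x => ((φ x ^ 2 : ℝ) : ℂ)) = A.comp A := by
    rw [← Φ.fc_mul]
    congr 1
    funext x
    simp only [Pi.mul_apply]
    push_cast
    ring
  have hA : A.adjoint = A := Φ.adjoint_fc_ofReal φ
  have hinner : inner ℂ (A (A u)) u = inner ℂ (A u) (A u) := by
    simpa only [hA] using A.adjoint_inner_left u (A u)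
  rw [hsq, ContinuousLinearMap.comp_apply, hinner, inner_self_eq_norm_sq_to_K]
  norm_cast

theorem re_inner_fc_ofReal_nonneg (φ : ℝ → ℝ) (hφ : ∀ x ∈ Φ.spectrum, 0 ≤ φ x) (u : ℋ) :
    0 ≤ (inner ℂ (Φ.fc (fun x => (φ x : ℂ)) u) u).re := by
  have hsqrt : (Φ.fc fun x => (φ x : ℂ)) = Φ.fc fun x => ((Real.sqrt (φ x) ^ 2 : ℝ) : ℂ) :=
    Φ.fc_eqOn _ _ fun x hx => by simp only [Real.sq_sqrt (hφ x hx)]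
  rw [hsqrt, ← Φ.norm_fc_ofReal_apply_sq]
  positivity

theorem re_inner_fc_ofReal_mono {φ ψ : ℝ → ℝ} (h : ∀ x ∈ Φ.spectrum, φ x ≤ ψ x) (u : ℋ) :
    (inner ℂ (Φ.fc (fun x => (φ x : ℂ)) u) u).re ≤
      (inner ℂ (Φ.fc (fun x => (ψ x : ℂ)) u) u).re := by
  have hsplit : (Φ.fc fun x => (ψ x : ℂ)) =
      (Φ.fc fun x => ((ψ x - φ x : ℝ) : ℂ)) + Φ.fc fun x => (φ x : ℂ) := by
    rw [← Φ.fc_add]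
    congr 1
    funext x
    simp only [Pi.add_apply]
    push_cast
    ring
  have hdiff := Φ.re_inner_fc_ofReal_nonneg _ (fun x hx => sub_nonneg.2 (h x hx)) u
  rw [hsplit, add_apply, inner_add_left, Complex.add_re]
  linarith

theorem re_inner_fc_mul_min (a : ℝ) (n : ℕ) (u : ℋ) :
    (inner ℂ (Φ.fc (fun x => ((a * min x n : ℝ) : ℂ)) u) u).re = a * Φ.formApprox n u := by
  have hsmul : (Φ.fc fun x => ((a * min x n : ℝ) : ℂ)) =
      (a : ℂ) • Φ.fc fun x => ((min x n : ℝ) : ℂ) := by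
    rw [← Φ.fc_smul]
    congr 1
    funext x
    simp only [Pi.smul_apply, smul_eq_mul]
    push_cast
    ring
  rw [hsmul, formApprox, smul_apply, inner_smul_left, Complex.conj_ofReal,
    Complex.re_ofReal_mul]

theorem fc_one_sub_exp_apply (t : ℝ) (u : ℋ) :
    Φ.fc (fun x => ((1 - Real.exp (-(t * x)) : ℝ) : ℂ)) u = u - Φ.heat t u := by
  have hsub : (fun x => ((1 - Real.exp (-(t * x)) : ℝ) : ℂ)) =
      (fun _ : ℝ => (1 : ℂ)) + (-1 : ℂ) • fun x : ℝ => Complex.exp (-(t * x)) := by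
    funext x
    simp only [Pi.add_apply, Pi.smul_apply, smul_eq_mul]
    push_cast
    ring
  rw [hsub, Φ.fc_add, Φ.fc_smul, Φ.fc_one, heat]
  simp [sub_eq_add_neg]

theorem formApprox_le_quadForm {u : ℋ} (hu : Φ.InFormDomain u) (n : ℕ) :
    Φ.formApprox n u ≤ Φ.quadForm u :=
  le_ciSup hu n

theorem norm_sub_heat_apply_sq_le (hpos : Φ.spectrum ⊆ Set.Ici 0) {t : ℝ} (ht : 0 < t)
    {u : ℋ} (hu : Φ.InFormDomain u) :
    ‖u - Φ.heat t u‖ ^ 2 ≤ t * Φ.quadForm u := by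
  obtain ⟨n, hn⟩ := exists_nat_ge t⁻¹
  have htn : 1 ≤ t * n := by
    simpa only [mul_inv_cancel₀ ht.ne'] using mul_le_mul_of_nonneg_left hn ht.le
  calc ‖u - Φ.heat t u‖ ^ 2
      = (inner ℂ (Φ.fc (fun x => (((1 - Real.exp (-(t * x))) ^ 2 : ℝ) : ℂ)) u) u).re := by
        rw [← fc_one_sub_exp_apply, norm_fc_ofReal_apply_sq]
    _ ≤ (inner ℂ (Φ.fc (fun x => ((t * min x n : ℝ) : ℂ)) u) u).re :=
        Φ.re_inner_fc_ofReal_mono (fun x hx => sq_one_sub_exp_neg_mul_le ht.le htn (hpos hx)) u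
    _ = t * Φ.formApprox n u := Φ.re_inner_fc_mul_min t n u
    _ ≤ t * Φ.quadForm u := by gcongr; exact Φ.formApprox_le_quadForm hu n

end SelfAdjointCalculus

theorem stmt16_general {X : Type} [MeasurableSpace X] (μ : Measure X)
    (Φ : SelfAdjointCalculus (Lp ℂ 2 μ)) (hpos : Φ.spectrum ⊆ Set.Ici 0)
    (c : ℝ → ℝ)
    (hultra : ∀ t > (0 : ℝ), ∀ u : Lp ℂ 2 μ, MemLp (u : X → ℂ) 1 μ →
      ‖Φ.heat t u‖ ≤ c t * ∫ x, ‖u x‖ ∂μ) :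
    ∀ r > (0 : ℝ), ∃ β : ℝ, ∀ u : Lp ℂ 2 μ, Φ.InFormDomain u →
      MemLp (u : X → ℂ) 1 μ →
      ‖u‖ ^ 2 ≤ r * Φ.quadForm u + β * (∫ x, ‖u x‖ ∂μ) ^ 2 := by
  intro r hr
  refine ⟨2 * c (r / 2) ^ 2, fun u hu hu1 => ?_⟩
  have hsmooth := Φ.norm_sub_heat_apply_sq_le hpos (half_pos hr) hu
  have hheat : ‖Φ.heat (r / 2) u‖ ^ 2 ≤ (c (r / 2) * ∫ x, ‖u x‖ ∂μ) ^ 2 :=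
    pow_le_pow_left₀ (norm_nonneg _) (hultra _ (half_pos hr) u hu1) 2
  calc ‖u‖ ^ 2 = ‖(u - Φ.heat (r / 2) u) + Φ.heat (r / 2) u‖ ^ 2 := by rw [sub_add_cancel]
    _ ≤ (‖u - Φ.heat (r / 2) u‖ + ‖Φ.heat (r / 2) u‖) ^ 2 := by gcongr; exact norm_add_le _ _
    _ ≤ 2 * (‖u - Φ.heat (r / 2) u‖ ^ 2 + ‖Φ.heat (r / 2) u‖ ^ 2) := add_sq_le
    _ ≤ r * Φ.quadForm u + 2 * c (r / 2) ^ 2 * (∫ x, ‖u x‖ ∂μ) ^ 2 := by linarith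

/-- Let `H ≥ 0` on `L²(X, μ)` (calculus `Φ`) have an ultracontractive
semigroup: `‖e^{-tH} f‖₂ ≤ c(t) ‖f‖₁` for all `f ∈ L¹ ∩ L²` and `t > 0`. Then the
super Poincaré inequality holds: for every `r > 0` there is `β(r) < ∞` with
`‖f‖₂² ≤ r h[f] + β(r) ‖f‖₁²` for every `f ∈ Q(H) ∩ L¹`. -/
theorem stmt16 {X : Type} [MeasurableSpace X] (μ : Measure X) [SigmaFinite μ]
    (Φ : SelfAdjointCalculus (Lp ℂ 2 μ)) (hpos : Φ.spectrum ⊆ Set.Ici 0)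
    (c : ℝ → ℝ)
    (hultra : ∀ t > (0 : ℝ), ∀ u : Lp ℂ 2 μ, MemLp (u : X → ℂ) 1 μ →
      ‖Φ.heat t u‖ ≤ c t * ∫ x, ‖u x‖ ∂μ) :
    ∀ r > (0 : ℝ), ∃ β : ℝ, ∀ u : Lp ℂ 2 μ, Φ.InFormDomain u →
      MemLp (u : X → ℂ) 1 μ →
      ‖u‖ ^ 2 ≤ r * Φ.quadForm u + β * (∫ x, ‖u x‖ ∂μ) ^ 2 :=
  stmt16_general μ Φ hpos c hultra
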